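/- Proposition 4.1 (one-species case, main direction): Consider a reaction network with a single species (d = 1), so that each source complex y_k and product complex y'_k is a nonnegative integer, and suppose κ_k > 0 for every k. Suppose P : ℤ_{≥0} × [0,∞) → ℝ solves the chemical master equation and there is a nonconstant function c : [0,∞) → ℝ_{>0} such that P(x,t) = e^{−c(t)} c(t)^x/x! for all x and t. Then the network is of first order: every complex satisfies y_k ≤ 1 and y'_k ≤ 1 for all k. -/

import Mathlib

/-!
Divide the master equation by the Poisson weight `p_c(x) = e^{-c} c^x / x!`. Since
`λ_k(x - ζ_k) p_c(x - ζ_k) = κ_k x^{(y'_k)} c^{y_k - y'_k} p_c(x)` (falling factorials), at each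
time it becomes an identity between polynomials in `x`:
`c' (x - c) / c = ∑_k κ_k (x^{(y'_k)} c^{y_k - y'_k} - x^{(y_k)})`.
If some complex exceeds `1`, let `M ≥ 2` be the largest one. The left side has degree at most
`1`, so the coefficient of `x^M` gives `∑_{y'_k = M} κ_k / c^{M - y_k} = ∑_{y_k = M} κ_k`. The
left side of this is strictly decreasing in `c > 0` unless it is an empty sum, so a mean that
takes two values forces both sums to be empty, contradicting the choice of `M`.
-/

open Finset

/-- One-species stochastic mass-action intensity `λ_k(x) = κ_k · x!/(x - y_k)!`,
taken to be `0` when `x < y_k`. -/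
noncomputable def intensity1 (κk : ℝ) (yk : ℕ) (x : ℕ) : ℝ :=
  κk * (x.descFactorial yk : ℝ)

/-- `P` solves the one-species chemical master equation on `[0,∞)`. -/
def solvesCME1 {K : ℕ} (κ : Fin K → ℝ) (y y' : Fin K → ℕ) (P : ℕ → ℝ → ℝ) : Prop :=
  ∀ x : ℕ, ∀ t ≥ (0:ℝ),
    HasDerivWithinAt (P x)
      ((∑ k, if y' k ≤ x + y k then
          intensity1 (κ k) (y k) (x + y k - y' k) * P (x + y k - y' k) t
        else 0)
       - ∑ k, intensity1 (κ k) (y k) x * P x t)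
      (Set.Ici 0) t

theorem Nat.descFactorial_mul_factorial_of_add_eq {z x p q : ℕ} (h : z + q = x + p) :
    z.descFactorial p * x.factorial = x.descFactorial q * z.factorial := by
  by_cases hpz : p ≤ z
  · have hqx : q ≤ x := by omega
    rw [← Nat.factorial_mul_descFactorial hpz, ← Nat.factorial_mul_descFactorial hqx,
      show z - p = x - q by omega]
    ring
  · rw [Nat.descFactorial_eq_zero_iff_lt.mpr (by omega),
      Nat.descFactorial_eq_zero_iff_lt.mpr (by omega : x < q)]
    simp

theorem Polynomial.coeff_descPochhammer_of_le {R : Type*} [Ring R] [NoZeroDivisors R]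
    [Nontrivial R] {n M : ℕ} (h : n ≤ M) :
    (descPochhammer R n).coeff M = if n = M then 1 else 0 := by
  split_ifs with hnM
  · subst hnM
    simpa [descPochhammer_natDegree] using (monic_descPochhammer R n).coeff_natDegree
  · exact coeff_eq_zero_of_natDegree_lt (by rw [descPochhammer_natDegree]; omega)

noncomputable def poissonWeight (a : ℝ) (x : ℕ) : ℝ :=
  Real.exp (-a) * a ^ x / x.factorial

theorem poissonWeight_ne_zero {a : ℝ} (ha : a ≠ 0) (x : ℕ) : poissonWeight a x ≠ 0 := by
  unfold poissonWeight
  have := x.factorial_ne_zero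
  positivity

theorem descFactorial_mul_poissonWeight_of_add_eq {z x p q : ℕ} (h : z + q = x + p) {a : ℝ}
    (ha : a ≠ 0) :
    z.descFactorial p * poissonWeight a z
      = x.descFactorial q * (a ^ p / a ^ q) * poissonWeight a x := by
  have hfac : (z.descFactorial p * x.factorial : ℝ) = x.descFactorial q * z.factorial := by
    exact_mod_cast Nat.descFactorial_mul_factorial_of_add_eq h
  have hpow : a ^ z * a ^ q = a ^ p * a ^ x := by rw [← pow_add, ← pow_add, h, add_comm]
  have := z.factorial_ne_zero
  have := x.factorial_ne_zero
  unfold poissonWeight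
  field_simp
  linear_combination a ^ z * a ^ q * hfac + x.descFactorial q * z.factorial * hpow

theorem ite_intensity1_mul_poissonWeight (κ : ℝ) (p q x : ℕ) {a : ℝ} (ha : a ≠ 0) :
    (if q ≤ x + p then intensity1 κ p (x + p - q) * poissonWeight a (x + p - q) else 0)
      = κ * (x.descFactorial q * (a ^ p / a ^ q) * poissonWeight a x) := by
  split_ifs with hq
  · rw [intensity1, mul_assoc,
      descFactorial_mul_poissonWeight_of_add_eq (by omega : x + p - q + q = x + p) ha]
  · rw [Nat.descFactorial_eq_zero_iff_lt.mpr (by omega : x < q)]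
    simp

theorem HasDerivWithinAt.poissonWeight {c : ℝ → ℝ} {b : ℝ} {s : Set ℝ} {t : ℝ}
    (hc : HasDerivWithinAt c b s t) (ht : c t ≠ 0) (x : ℕ) :
    HasDerivWithinAt (fun u => poissonWeight (c u) x)
      (b * (x - c t) / c t * poissonWeight (c t) x) s t := by
  refine ((hc.neg.exp.mul (hc.pow x)).div_const (x.factorial : ℝ)).congr_deriv ?_
  have := x.factorial_ne_zero
  unfold _root_.poissonWeight
  simp only [Pi.neg_apply, Pi.pow_apply]
  rcases x with _ | n
  · field_simp
    ring
  · field_simp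
    simp only [Nat.add_sub_cancel, pow_succ]
    push_cast
    ring

theorem differentiableWithinAt_of_poissonWeight {P : ℕ → ℝ → ℝ} {c : ℝ → ℝ} {s : Set ℝ}
    {t : ℝ} (hP : ∀ x, DifferentiableWithinAt ℝ (P x) s t)
    (hPoisson : ∀ x, ∀ u ∈ s, P x u = poissonWeight (c u) x) (ht : t ∈ s) :
    DifferentiableWithinAt ℝ c s t := by
  have hmean : ∀ u ∈ s, c u = P 1 u / P 0 u := fun u hu => by
    simp [hPoisson _ u hu, poissonWeight, Real.exp_ne_zero]
  refine ((hP 1).div (hP 0) ?_).congr hmean (hmean t ht)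
  simp [hPoisson 0 t ht, poissonWeight, Real.exp_ne_zero]

theorem solvesCME1.poissonWeight_balance {K : ℕ} {κ : Fin K → ℝ} {y y' : Fin K → ℕ}
    {P : ℕ → ℝ → ℝ} {c : ℝ → ℝ} (hCME : solvesCME1 κ y y' P)
    (hPoisson : ∀ x : ℕ, ∀ t ≥ (0:ℝ), P x t = poissonWeight (c t) x) {b t : ℝ}
    (hc : HasDerivWithinAt c b (Set.Ici 0) t) (ht : 0 ≤ t) (hct : c t ≠ 0) (x : ℕ) :
    b * (x - c t) / c t = ∑ k, κ k *
      (x.descFactorial (y' k) * (c t ^ y k / c t ^ y' k) - x.descFactorial (y k)) := by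
  have hPx : HasDerivWithinAt (P x) (b * (x - c t) / c t * poissonWeight (c t) x)
      (Set.Ici 0) t :=
    (hc.poissonWeight hct x).congr (hPoisson x) (hPoisson x t ht)
  have hderiv := (uniqueDiffOn_Ici 0 t ht).eq_deriv _ hPx (hCME x t ht)
  simp only [fun z => hPoisson z t ht, ite_intensity1_mul_poissonWeight _ _ _ _ hct] at hderiv
  simp only [intensity1] at hderiv
  refine mul_right_cancel₀ (poissonWeight_ne_zero hct x) ?_
  rw [hderiv, sum_mul, ← sum_sub_distrib]
  exact sum_congr rfl fun k _ => by ring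

open Polynomial in
theorem sum_eq_sum_of_forall_nat_eq_affine {ι : Type*} [Fintype ι] (u v : ι → ℝ)
    (p q : ι → ℕ) {M : ℕ} (hM : 2 ≤ M) (hp : ∀ i, p i ≤ M) (hq : ∀ i, q i ≤ M) {α β : ℝ}
    (h : ∀ x : ℕ,
      ∑ i, (u i * x.descFactorial (p i) - v i * x.descFactorial (q i)) = α * x + β) :
    ∑ i with p i = M, u i = ∑ i with q i = M, v i := by
  set Q : ℝ[X] := ∑ i, (C (u i) * descPochhammer ℝ (p i) - C (v i) * descPochhammer ℝ (q i))
  have hQ : Q = C α * X + C β := by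
    refine eq_of_infinite_eval_eq _ _
      ((Set.infinite_range_of_injective Nat.cast_injective).mono ?_)
    rintro _ ⟨x, rfl⟩
    simp [Q, eval_finsetSum, descPochhammer_eval_eq_descFactorial, ← h]
  have hcoeff := congrArg (coeff · M) hQ
  simp only [Q, finsetSum_coeff, coeff_sub, coeff_C_mul, coeff_descPochhammer_of_le (hp _),
    coeff_descPochhammer_of_le (hq _), coeff_add, coeff_X, coeff_C] at hcoeff
  rw [sum_filter, sum_filter, ← sub_eq_zero, ← sum_sub_distrib]
  simpa [show M ≠ 0 by omega, show 1 ≠ M by omega] using hcoeff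

theorem strictAntiOn_sum_div_pow {ι : Type*} {s : Finset ι} (hs : s.Nonempty) {w : ι → ℝ}
    (hw : ∀ i ∈ s, 0 < w i) {n : ι → ℕ} (hn : ∀ i ∈ s, n i ≠ 0) :
    StrictAntiOn (fun a => ∑ i ∈ s, w i / a ^ n i) (Set.Ioi 0) := by
  intro a ha b hb hab
  refine sum_lt_sum_of_nonempty hs fun i hi => ?_
  exact div_lt_div_of_pos_left (hw i hi) (pow_pos ha _) (pow_lt_pow_left₀ hab ha.le (hn i hi))

section TopLevel

variable {ι : Type*} [Fintype ι] {κ : ι → ℝ} {y y' : ι → ℕ} {M : ℕ}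

theorem sum_filter_div_pow_eq_of_forall_nat (hM : 2 ≤ M) (hy : ∀ i, y i ≤ M)
    (hy' : ∀ i, y' i ≤ M) {a b : ℝ} (ha : a ≠ 0)
    (h : ∀ x : ℕ, b * (x - a) / a
      = ∑ i, κ i * (x.descFactorial (y' i) * (a ^ y i / a ^ y' i) - x.descFactorial (y i))) :
    ∑ i with y' i = M, κ i / a ^ (M - y i) = ∑ i with y i = M, κ i := by
  have hlead := sum_eq_sum_of_forall_nat_eq_affine (fun i => κ i * (a ^ y i / a ^ y' i)) κ y' y
    hM hy' hy (α := b / a) (β := -b) fun x => by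
      rw [show b / a * x + -b = b * (x - a) / a by field_simp; ring, h x]
      exact sum_congr rfl fun i _ => by ring
  rw [← hlead]
  refine sum_congr rfl fun i hi => ?_
  rw [(mem_filter.mp hi).2, pow_sub₀ a ha (hy i)]
  field_simp

theorem forall_ne_of_sum_filter_div_pow_eq (hκ : ∀ i, 0 < κ i) (hyy' : ∀ i, y' i ≠ y i)
    (hy : ∀ i, y i ≤ M) {a₁ a₂ : ℝ} (h₁ : 0 < a₁) (h₂ : 0 < a₂)
    (hne : a₁ ≠ a₂)
    (hbal₁ : ∑ i with y' i = M, κ i / a₁ ^ (M - y i) = ∑ i with y i = M, κ i)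
    (hbal₂ : ∑ i with y' i = M, κ i / a₂ ^ (M - y i) = ∑ i with y i = M, κ i) :
    ∀ i, y i ≠ M ∧ y' i ≠ M := by
  have hy'M : ∀ i, y' i ≠ M := by
    intro i hi
    have hanti := strictAntiOn_sum_div_pow (s := {i | y' i = M}) ⟨i, by simpa using hi⟩
      (fun j _ => hκ j) fun j hj => by
        have := hyy' j
        have := hy j
        simp only [mem_filter, mem_univ, true_and] at hj
        show M - y j ≠ 0
        omega
    exact hne (hanti.injOn h₁ h₂ (hbal₁.trans hbal₂.symm))
  have hyM_sum : ∑ i with y i = M, κ i = 0 := by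
    rw [← hbal₁, sum_eq_zero]
    intro i hi
    exact absurd (mem_filter.mp hi).2 (hy'M i)
  refine fun i => ⟨fun hi => ?_, hy'M i⟩
  exact (sum_pos (fun j _ => hκ j) ⟨i, by simpa using hi⟩).ne' hyM_sum

end TopLevel

/-- Proposition 4.1 (one-species case, main direction): if a one-species network with
positive rate constants admits a solution of the chemical master equation that is Poisson
with nonconstant positive mean `c(t)` for all `t ≥ 0`, then the network is of first order:
every complex satisfies `y_k ≤ 1` and `y'_k ≤ 1`. -/
theorem oneSpecies_nonconstant_Poisson_implies_firstOrder
    {K : ℕ} (κ : Fin K → ℝ) (y y' : Fin K → ℕ)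
    (hκ : ∀ k, 0 < κ k) (hyy' : ∀ k, y' k ≠ y k)
    (P : ℕ → ℝ → ℝ) (c : ℝ → ℝ)
    (hcpos : ∀ t ≥ (0:ℝ), 0 < c t)
    (hnonconst : ∃ s ≥ (0:ℝ), ∃ t ≥ (0:ℝ), c s ≠ c t)
    (hCME : solvesCME1 κ y y' P)
    (hPoisson : ∀ x : ℕ, ∀ t ≥ (0:ℝ),
      P x t = Real.exp (-(c t)) * (c t) ^ x / x.factorial) :
    ∀ k, y k ≤ 1 ∧ y' k ≤ 1 := by
  intro k₀
  by_contra hk₀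
  set M := univ.sup fun k => max (y k) (y' k)
  have hle : ∀ k, max (y k) (y' k) ≤ M := fun k =>
    le_sup (f := fun k => max (y k) (y' k)) (mem_univ k)
  have hyM : ∀ k, y k ≤ M := fun k => (le_max_left _ _).trans (hle k)
  have hy'M : ∀ k, y' k ≤ M := fun k => (le_max_right _ _).trans (hle k)
  have hM : 2 ≤ M := by
    have := hle k₀
    omega
  have hbal : ∀ t ≥ (0:ℝ),
      ∑ k with y' k = M, κ k / c t ^ (M - y k) = ∑ k with y k = M, κ k := by
    intro t ht
    have hc := (differentiableWithinAt_of_poissonWeight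
      (fun x => (hCME x t ht).differentiableWithinAt) hPoisson ht).hasDerivWithinAt
    exact sum_filter_div_pow_eq_of_forall_nat hM hyM hy'M (hcpos t ht).ne'
      (hCME.poissonWeight_balance hPoisson hc ht (hcpos t ht).ne')
  obtain ⟨s, hs, t, ht, hne⟩ := hnonconst
  have hnone := forall_ne_of_sum_filter_div_pow_eq hκ hyy' hyM (hcpos s hs) (hcpos t ht) hne
    (hbal s hs) (hbal t ht)
  obtain ⟨k₁, -, hk₁⟩ :=
    exists_mem_eq_sup univ ⟨k₀, mem_univ _⟩ fun k => max (y k) (y' k)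
  have := hnone k₁
  omega
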